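/- arXiv:1608.01081 — 12 statements merged into one kernel-verified Lean document; each statement's English description precedes it below -/
import Mathlib

section
/- Let m ≥ 2, let P_1,…,P_m ≥ 0 be transmit powers with Σ_{i=1}^m P_i ≤ P_t, let γ_1,…,γ_m > 0 be channel gains with γ_1 ≥ γ_i for all i, and let P_tol ≥ 0. If the downlink SIC power constraints (P_i − Σ_{j=1}^{i−1} P_j)·γ_{i−1} ≥ P_tol hold for every i = 2,…,m, then the power of the highest channel gain user satisfies P_1 ≤ P_t/2^{m−1} − (1 − 2^{−(m−1)})·P_tol/γ_1; in particular P_1 ≤ P_t/2^{m−1}. -/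
/-! Write `s_k = P 1 + ⋯ + P k` and `t = Ptol / γ 1`. Since `γ (k-1) ≤ γ 1`, the SIC constraint
for user `k` gives `P k ≥ s_(k-1) + t`, hence `s_k + t ≥ 2 (s_(k-1) + t)`. Iterating,
`2^(m-1) (P 1 + t) ≤ s_m + t ≤ Pt + t`, which rearranges to the bound. -/

section LinearOrderedField

variable {K : Type*} [Field K] [LinearOrder K] [IsStrictOrderedRing K]

theorem pow_mul_add_le_of_two_mul_add_le {S : ℕ → K} {t : K} {n : ℕ}
    (h : ∀ k < n, 2 * S k + t ≤ S (k + 1)) : 2 ^ n * (S 0 + t) ≤ S n + t := by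
  induction n with
  | zero => simp
  | succ n ih =>
    have ih := ih fun k hk => h k (by omega)
    calc 2 ^ (n + 1) * (S 0 + t) = 2 * (2 ^ n * (S 0 + t)) := by ring
      _ ≤ 2 * (S n + t) := by linarith
      _ ≤ S (n + 1) + t := by linarith [h n n.lt_succ_self]

theorem div_le_of_le_mul_of_le {c x b b' : K} (hc : 0 ≤ c) (hb : 0 < b) (hbb' : b ≤ b')
    (h : c ≤ x * b) : c / b' ≤ x :=
  (div_le_div_of_nonneg_left hc hb hbb').trans ((div_le_iff₀ hb).mpr h)

theorem le_div_pow_sub_of_pow_mul_add_le {p B t : K} {n : ℕ} (h : 2 ^ n * (p + t) ≤ B + t) :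
    p ≤ B / 2 ^ n - (1 - (1 / 2 : K) ^ n) * t := by
  calc p = 2 ^ n * (p + t) / 2 ^ n - t := by field_simp; ring
    _ ≤ (B + t) / 2 ^ n - t := by gcongr
    _ = B / 2 ^ n - (1 - (1 / 2 : K) ^ n) * t := by rw [one_div_pow]; field_simp; ring

end LinearOrderedField

theorem dl_noma_max_power_strongest_user_general
    (m : ℕ) (hm : 2 ≤ m) (P γ : ℕ → ℝ) (Pt Ptol : ℝ)
    (hsum : ∑ i ∈ Finset.Icc 1 m, P i ≤ Pt)
    (hγ : ∀ i ∈ Finset.Icc 1 m, 0 < γ i)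
    (hγ1 : ∀ i ∈ Finset.Icc 1 m, γ i ≤ γ 1)
    (hPtol : 0 ≤ Ptol)
    (hSIC : ∀ i ∈ Finset.Icc 2 m,
      (P i - ∑ j ∈ Finset.Icc 1 (i - 1), P j) * γ (i - 1) ≥ Ptol) :
    P 1 ≤ Pt / 2 ^ (m - 1) - (1 - (1 / 2 : ℝ) ^ (m - 1)) * Ptol / γ 1 ∧
    P 1 ≤ Pt / 2 ^ (m - 1) := by
  set S : ℕ → ℝ := fun k => ∑ i ∈ Finset.Icc 1 (k + 1), P i
  have hdouble : ∀ k < m - 1, 2 * S k + Ptol / γ 1 ≤ S (k + 1) := by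
    intro k hk
    have hstep : Ptol / γ 1 ≤ P (k + 2) - S k := by
      refine div_le_of_le_mul_of_le hPtol (hγ (k + 1) (by simp; omega))
        (hγ1 (k + 1) (by simp; omega)) ?_
      simpa using hSIC (k + 2) (by simp; omega)
    have hsucc : S (k + 1) = S k + P (k + 2) := Finset.sum_Icc_succ_top (by omega) P
    linarith
  have hchain := pow_mul_add_le_of_two_mul_add_le hdouble
  have hS : S (m - 1) = ∑ i ∈ Finset.Icc 1 m, P i := by
    simp only [S, Nat.sub_add_cancel (by omega : 1 ≤ m)]
  have hbound : P 1 ≤ Pt / 2 ^ (m - 1) - (1 - (1 / 2 : ℝ) ^ (m - 1)) * (Ptol / γ 1) :=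
    le_div_pow_sub_of_pow_mul_add_le (by simpa [S] using hchain.trans (by linarith))
  have hslack : 0 ≤ (1 - (1 / 2 : ℝ) ^ (m - 1)) * (Ptol / γ 1) :=
    mul_nonneg (sub_nonneg.mpr (pow_le_one₀ (by norm_num) (by norm_num)))
      (div_nonneg hPtol (hγ 1 (by simp; omega)).le)
  rw [mul_div_assoc]
  exact ⟨hbound, by linarith⟩

/-- Lemma 1 (downlink NOMA): under the SIC power constraints, the power of the
highest channel gain user satisfies
`P 1 ≤ Pt/2^(m-1) - (1 - (1/2)^(m-1)) * Ptol / γ 1`, and in particular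
`P 1 ≤ Pt/2^(m-1)`. -/
theorem dl_noma_max_power_strongest_user
    (m : ℕ) (hm : 2 ≤ m) (P γ : ℕ → ℝ) (Pt Ptol : ℝ)
    (hP : ∀ i ∈ Finset.Icc 1 m, 0 ≤ P i)
    (hsum : ∑ i ∈ Finset.Icc 1 m, P i ≤ Pt)
    (hγ : ∀ i ∈ Finset.Icc 1 m, 0 < γ i)
    (hγ1 : ∀ i ∈ Finset.Icc 1 m, γ i ≤ γ 1)
    (hPtol : 0 ≤ Ptol)
    (hSIC : ∀ i ∈ Finset.Icc 2 m,
      (P i - ∑ j ∈ Finset.Icc 1 (i - 1), P j) * γ (i - 1) ≥ Ptol) :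
    P 1 ≤ Pt / 2 ^ (m - 1) - (1 - (1 / 2 : ℝ) ^ (m - 1)) * Ptol / γ 1 ∧
    P 1 ≤ Pt / 2 ^ (m - 1) :=
  dl_noma_max_power_strongest_user_general m hm P γ Pt Ptol hsum hγ hγ1 hPtol hSIC
end

section
/- Let m ≥ 2, let P_1,…,P_m ≥ 0 be transmit powers with Σ_{i=1}^m P_i ≤ P_t, let γ_1,…,γ_m > 0, and let P_tol ≥ 0. If the downlink SIC power constraints (P_i − Σ_{j=1}^{i−1} P_j)·γ_{i−1} ≥ P_tol hold for every i = 2,…,m, then for every index k with 1 ≤ k ≤ m−1 the power of the k-th strongest user satisfies P_k ≤ P_t/2^{m−k}. -/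
/-!
Write `S n = P 1 + ⋯ + P n`. Since `γ (i - 1) > 0` and `Ptol ≥ 0`, each SIC constraint says
`P i ≥ S (i - 1)`, i.e. `S i ≥ 2 S (i - 1)`: the partial sums at least double from one user to the
next. Iterating from `k` to `m` gives `2 ^ (m - k) * P k ≤ 2 ^ (m - k) * S k ≤ S m ≤ Pt`.
-/

open Finset

section OrderedSemiring

variable {α : Type*} [Semiring α] [PartialOrder α] [IsOrderedRing α]

theorem two_pow_sub_mul_le_of_two_mul_le_succ {s : ℕ → α} {k m : ℕ} (hkm : k ≤ m)
    (h : ∀ i, k ≤ i → i < m → 2 * s i ≤ s (i + 1)) : 2 ^ (m - k) * s k ≤ s m := by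
  induction m, hkm using Nat.le_induction with
  | base => simp
  | succ n hkn ih =>
    calc 2 ^ (n + 1 - k) * s k = 2 * (2 ^ (n - k) * s k) := by
          rw [Nat.sub_add_comm hkn, pow_succ', mul_assoc]
      _ ≤ 2 * s n :=
          mul_le_mul_of_nonneg_left (ih fun i hki hin => h i hki (by omega)) zero_le_two
      _ ≤ s (n + 1) := h n hkn (by omega)

theorem two_mul_sum_Icc_le_sum_Icc_succ {P : ℕ → α} {i : ℕ}
    (h : ∑ j ∈ Icc 1 i, P j ≤ P (i + 1)) :
    2 * ∑ j ∈ Icc 1 i, P j ≤ ∑ j ∈ Icc 1 (i + 1), P j := by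
  rw [sum_Icc_succ_top (by omega), two_mul]
  exact add_le_add le_rfl h

end OrderedSemiring

theorem dl_noma_power_bound_kth_user_general
    (m : ℕ) (P γ : ℕ → ℝ) (Pt Ptol : ℝ)
    (hP : ∀ i ∈ Finset.Icc 1 m, 0 ≤ P i)
    (hsum : ∑ i ∈ Finset.Icc 1 m, P i ≤ Pt)
    (hγ : ∀ i ∈ Finset.Icc 1 m, 0 < γ i)
    (hPtol : 0 ≤ Ptol)
    (hSIC : ∀ i ∈ Finset.Icc 2 m,
      (P i - ∑ j ∈ Finset.Icc 1 (i - 1), P j) * γ (i - 1) ≥ Ptol) :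
    ∀ k : ℕ, 1 ≤ k → k ≤ m - 1 → P k ≤ Pt / 2 ^ (m - k) := by
  intro k hk hkm
  have hprefix : ∀ i, 1 ≤ i → i < m → ∑ j ∈ Icc 1 i, P j ≤ P (i + 1) := by
    intro i hi him
    have hgap := hSIC (i + 1) (mem_Icc.2 ⟨by omega, by omega⟩)
    rw [Nat.add_sub_cancel] at hgap
    exact sub_nonneg.1 <| nonneg_of_mul_nonneg_left (hPtol.trans hgap)
      (hγ i (mem_Icc.2 ⟨hi, by omega⟩))
  have hdouble : 2 ^ (m - k) * ∑ j ∈ Icc 1 k, P j ≤ ∑ j ∈ Icc 1 m, P j :=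
    two_pow_sub_mul_le_of_two_mul_le_succ (by omega) fun i hki him =>
      two_mul_sum_Icc_le_sum_Icc_succ (hprefix i (hk.trans hki) him)
  have hPk : P k ≤ ∑ j ∈ Icc 1 k, P j :=
    single_le_sum (fun j hj => hP j (mem_Icc.2 ⟨(mem_Icc.1 hj).1, by grind⟩))
      (mem_Icc.2 ⟨hk, le_rfl⟩)
  rw [le_div_iff₀ (by positivity), mul_comm]
  calc 2 ^ (m - k) * P k ≤ 2 ^ (m - k) * ∑ j ∈ Icc 1 k, P j := by gcongr
    _ ≤ Pt := hdouble.trans hsum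

/-- In an m-user downlink NOMA cluster satisfying the SIC power constraints,
the power of the k-th strongest user (1 ≤ k ≤ m-1) satisfies `P k ≤ Pt / 2^(m-k)`. -/
theorem dl_noma_power_bound_kth_user
    (m : ℕ) (hm : 2 ≤ m) (P γ : ℕ → ℝ) (Pt Ptol : ℝ)
    (hP : ∀ i ∈ Finset.Icc 1 m, 0 ≤ P i)
    (hsum : ∑ i ∈ Finset.Icc 1 m, P i ≤ Pt)
    (hγ : ∀ i ∈ Finset.Icc 1 m, 0 < γ i)
    (hPtol : 0 ≤ Ptol)
    (hSIC : ∀ i ∈ Finset.Icc 2 m,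
      (P i - ∑ j ∈ Finset.Icc 1 (i - 1), P j) * γ (i - 1) ≥ Ptol) :
    ∀ k : ℕ, 1 ≤ k → k ≤ m - 1 → P k ≤ Pt / 2 ^ (m - k) :=
  dl_noma_power_bound_kth_user_general m P γ Pt Ptol hP hsum hγ hPtol hSIC
end

section
/- Let m ≥ 1, let γ_1,…,γ_m > 0, let ω > 0, and let P_t′ > 0 be the per-user transmit power budget. Then full-power transmission is optimal for uplink NOMA: for every power vector Q_1,…,Q_m with 0 ≤ Q_i ≤ P_t′ for all i, Σ_{i=1}^m log₂(1 + Q_i γ_i / (Σ_{j=i+1}^{m} Q_j γ_j + ω)) ≤ Σ_{i=1}^m log₂(1 + P_t′ γ_i / (Σ_{j=i+1}^{m} P_t′ γ_j + ω)). -/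
/-!
Writing `T i = ∑_{j ≥ i} Q_j γ_j + ω` for the received power of users `i, …, m` plus noise,
the rate of user `i` is `log₂ (T i / T (i + 1))`, so the sum throughput telescopes to
`log₂ (T 1) - log₂ ω`. It therefore depends on the powers only through the total received
power `T 1`, which is largest when every user transmits at full power.
-/

open Finset Real

theorem Finset.sum_Icc_eq_add_sum_Icc_succ {M : Type*} [AddCommMonoid M] (x : ℕ → M)
    {i m : ℕ} (him : i ≤ m) :
    ∑ j ∈ Icc i m, x j = x i + ∑ j ∈ Icc (i + 1) m, x j := by
  rw [Icc_eq_cons_Ioc him, sum_cons, Icc_add_one_left_eq_Ioc]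

/-- Sum throughput as a function of the received powers `x i = P i * γ i`. -/
noncomputable def sumThroughput (m : ℕ) (ω : ℝ) (x : ℕ → ℝ) : ℝ :=
  ∑ i ∈ Icc 1 m, logb 2 (1 + x i / (∑ j ∈ Icc (i + 1) m, x j + ω))

theorem sumThroughput_eq_logb_sub {m : ℕ} {ω : ℝ} {x : ℕ → ℝ}
    (hx : ∀ i ∈ Icc 1 m, 0 ≤ x i) (hω : 0 < ω) :
    sumThroughput m ω x = logb 2 (∑ j ∈ Icc 1 m, x j + ω) - logb 2 ω := by
  set T : ℕ → ℝ := fun i ↦ ∑ j ∈ Icc i m, x j + ω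
  have hT_pos : ∀ i, 1 ≤ i → 0 < T i := fun i hi ↦
    add_pos_of_nonneg_of_pos
      (sum_nonneg fun j hj ↦ hx j (Icc_subset_Icc_left hi hj)) hω
  have hT_last : T (m + 1) = ω := by simp [T]
  have hrate : ∀ i ∈ Icc 1 m,
      logb 2 (1 + x i / (∑ j ∈ Icc (i + 1) m, x j + ω)) = -(logb 2 (T (i + 1)) - logb 2 (T i)) := by
    intro i hi
    obtain ⟨h1i, him⟩ := mem_Icc.mp hi
    have hnext := hT_pos (i + 1) (by omega)
    have hsplit : T i = x i + T (i + 1) := by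
      simp only [T, sum_Icc_eq_add_sum_Icc_succ x him, add_assoc]
    have hratio : 1 + x i / T (i + 1) = T i / T (i + 1) := by
      rw [hsplit, add_div, div_self hnext.ne', add_comm]
    change logb 2 (1 + x i / T (i + 1)) = _
    rw [hratio, logb_div (hT_pos i h1i).ne' hnext.ne']
    ring
  have htelescope := sum_Ico_sub (fun i ↦ logb 2 (T i)) (Nat.le_add_left 1 m)
  rw [Ico_add_one_right_eq_Icc, hT_last] at htelescope
  rw [sumThroughput, sum_congr rfl hrate, sum_neg_distrib, htelescope]
  ring

theorem sumThroughput_mono {m : ℕ} {ω : ℝ} {x y : ℕ → ℝ}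
    (hx : ∀ i ∈ Icc 1 m, 0 ≤ x i) (hxy : ∀ i ∈ Icc 1 m, x i ≤ y i) (hω : 0 < ω) :
    sumThroughput m ω x ≤ sumThroughput m ω y := by
  have hy : ∀ i ∈ Icc 1 m, 0 ≤ y i := fun i hi ↦ (hx i hi).trans (hxy i hi)
  rw [sumThroughput_eq_logb_sub hx hω, sumThroughput_eq_logb_sub hy hω]
  exact sub_le_sub_right (logb_le_logb_of_le one_lt_two
    (add_pos_of_nonneg_of_pos (sum_nonneg hx) hω) (by gcongr with i hi; exact hxy i hi)) _

theorem ul_noma_full_power_optimal_general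
    (m : ℕ) (γ : ℕ → ℝ) (ω Pt' : ℝ)
    (hγ : ∀ i ∈ Finset.Icc 1 m, 0 < γ i)
    (hω : 0 < ω)
    (Q : ℕ → ℝ) (hQ : ∀ i ∈ Finset.Icc 1 m, 0 ≤ Q i ∧ Q i ≤ Pt') :
    ∑ i ∈ Finset.Icc 1 m,
        Real.logb 2 (1 + Q i * γ i / (∑ j ∈ Finset.Icc (i + 1) m, Q j * γ j + ω))
      ≤ ∑ i ∈ Finset.Icc 1 m,
        Real.logb 2 (1 + Pt' * γ i / (∑ j ∈ Finset.Icc (i + 1) m, Pt' * γ j + ω)) :=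
  sumThroughput_mono (fun i hi ↦ mul_nonneg (hQ i hi).1 (hγ i hi).le)
    (fun i hi ↦ mul_le_mul_of_nonneg_right (hQ i hi).2 (hγ i hi).le) hω

/-- Full-power transmission maximizes the uplink NOMA sum throughput. -/
theorem ul_noma_full_power_optimal
    (m : ℕ) (hm : 1 ≤ m) (γ : ℕ → ℝ) (ω Pt' : ℝ)
    (hγ : ∀ i ∈ Finset.Icc 1 m, 0 < γ i)
    (hω : 0 < ω) (hPt : 0 < Pt')
    (Q : ℕ → ℝ) (hQ : ∀ i ∈ Finset.Icc 1 m, 0 ≤ Q i ∧ Q i ≤ Pt') :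
    ∑ i ∈ Finset.Icc 1 m,
        Real.logb 2 (1 + Q i * γ i / (∑ j ∈ Finset.Icc (i + 1) m, Q j * γ j + ω))
      ≤ ∑ i ∈ Finset.Icc 1 m,
        Real.logb 2 (1 + Pt' * γ i / (∑ j ∈ Finset.Icc (i + 1) m, Pt' * γ j + ω)) :=
  ul_noma_full_power_optimal_general m γ ω Pt' hγ hω Q hQ
end

section
/- Let m ≥ 2, let γ_1,…,γ_m > 0, let ω > 0, let P_t′ > 0, and let φ > 0 (where φ = 2^{R′_{m−1}/(ωB)} − 1 encodes the minimum-rate requirement of user m−1). Define P_i = P_t′ for i = 1,…,m−1 and P_m = P_t′γ_{m−1}/(φ·γ_m) − ω/γ_m, and assume 0 ≤ P_m ≤ P_t′. Then: (a) user (m−1)'s rate constraint holds with equality, i.e., P_{m−1}γ_{m−1} = φ·(P_m γ_m + ω); and (b) for every Q_1,…,Q_m with 0 ≤ Q_i ≤ P_t′ for all i and Q_{m−1}γ_{m−1} ≥ φ·(Q_m γ_m + ω), the sum throughput satisfies Σ_{i=1}^m log₂(1 + Q_i γ_i / (Σ_{j=i+1}^{m} Q_j γ_j + ω)) ≤ Σ_{i=1}^m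 log₂(1 + P_i γ_i / (Σ_{j=i+1}^{m} P_j γ_j + ω)). -/
/-! Writing `T i = ∑_{j ≥ i} P_j γ_j + ω` for the interference-plus-noise seen by user `i`
before its own signal is removed, the rate of user `i` is `log (T i / T (i+1))`, so the sum
throughput telescopes to `log (∑_j P_j γ_j + ω) - log ω` and only depends on the total received
power. That total is maximal for the allocation `P`: every user `i < m` already receives
`Pt' γ_i`, and the constraint of user `m - 1` together with `Q_{m-1} ≤ Pt'` caps `Q_m γ_m` at
`Pt' γ_{m-1} / φ - ω = P_m γ_m`. -/

open Finset

section SICRate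

variable {b ω : ℝ} {a m : ℕ}

lemma sum_logb_sic_rate_eq (s : ℕ → ℝ) (hω : 0 < ω)
    (hs : ∀ i ∈ Icc a m, 0 ≤ s i) :
    ∑ i ∈ Icc a m, Real.logb b (1 + s i / (∑ j ∈ Icc (i + 1) m, s j + ω))
      = Real.logb b (∑ j ∈ Icc a m, s j + ω) - Real.logb b ω := by
  set T : ℕ → ℝ := fun i ↦ ∑ j ∈ Icc i m, s j + ω
  have hT_pos : ∀ i, a ≤ i → 0 < T i := fun i hi ↦
    add_pos_of_nonneg_of_pos (sum_nonneg fun j hj ↦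
      hs j (mem_Icc.2 ⟨hi.trans (mem_Icc.1 hj).1, (mem_Icc.1 hj).2⟩)) hω
  have hT_succ : ∀ i ≤ m, T i = s i + T (i + 1) := fun i hi ↦ by
    simp only [T, ← insert_Icc_add_one_left_eq_Icc hi]
    rw [sum_insert (by simp), add_assoc]
  have hterm : ∀ i ∈ Icc a m,
      Real.logb b (1 + s i / T (i + 1)) = Real.logb b (T i) - Real.logb b (T (i + 1)) := by
    intro i hi
    obtain ⟨hai, him⟩ := mem_Icc.1 hi
    have hT₁ := hT_pos (i + 1) (by omega)
    rw [← Real.logb_div (hT_pos i hai).ne' hT₁.ne', hT_succ i him, add_div, div_self hT₁.ne',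
      add_comm]
  rcases le_or_gt a (m + 1) with ha | ha
  · have hTω : T (m + 1) = ω := by simp [T]
    have htel := sum_Ico_sub (fun i ↦ Real.logb b (T i)) ha
    rw [Ico_add_one_right_eq_Icc, hTω, sum_sub_distrib] at htel
    rw [sum_congr rfl hterm, sum_sub_distrib]
    linarith
  · simp [Icc_eq_empty_of_lt (show m < a by omega)]

lemma sum_logb_sic_rate_le (hb : 1 < b) (hω : 0 < ω) {x y : ℕ → ℝ}
    (hx : ∀ i ∈ Icc a m, 0 ≤ x i) (hxy : ∀ i ∈ Icc a m, x i ≤ y i) :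
    ∑ i ∈ Icc a m, Real.logb b (1 + x i / (∑ j ∈ Icc (i + 1) m, x j + ω))
      ≤ ∑ i ∈ Icc a m, Real.logb b (1 + y i / (∑ j ∈ Icc (i + 1) m, y j + ω)) := by
  have hy : ∀ i ∈ Icc a m, 0 ≤ y i := fun i hi ↦ (hx i hi).trans (hxy i hi)
  rw [sum_logb_sic_rate_eq x hω hx, sum_logb_sic_rate_eq y hω hy]
  have hx_pos : 0 < ∑ j ∈ Icc a m, x j + ω := add_pos_of_nonneg_of_pos (sum_nonneg hx) hω
  gcongr with j hj
  exact hxy j hj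

end SICRate

theorem ul_noma_opt_power_rate_binding_general
    (m : ℕ) (hm : 2 ≤ m) (γ : ℕ → ℝ) (ω Pt' φ : ℝ)
    (hγ : ∀ i ∈ Finset.Icc 1 m, 0 < γ i)
    (hω : 0 < ω) (hφ : 0 < φ)
    (P : ℕ → ℝ)
    (hPdef : ∀ i ∈ Finset.Icc 1 (m - 1), P i = Pt')
    (hPm : P m = Pt' * γ (m - 1) / (φ * γ m) - ω / γ m) :
    P (m - 1) * γ (m - 1) = φ * (P m * γ m + ω) ∧
    ∀ Q : ℕ → ℝ, (∀ i ∈ Finset.Icc 1 m, 0 ≤ Q i ∧ Q i ≤ Pt') →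
      Q (m - 1) * γ (m - 1) ≥ φ * (Q m * γ m + ω) →
      ∑ i ∈ Finset.Icc 1 m,
          Real.logb 2 (1 + Q i * γ i / (∑ j ∈ Finset.Icc (i + 1) m, Q j * γ j + ω))
        ≤ ∑ i ∈ Finset.Icc 1 m,
          Real.logb 2 (1 + P i * γ i / (∑ j ∈ Finset.Icc (i + 1) m, P j * γ j + ω)) := by
  have hm₁ : m - 1 ∈ Icc 1 m := mem_Icc.2 ⟨by omega, by omega⟩
  have hP_full : ∀ i ∈ Icc 1 m, i ≠ m → P i = Pt' := fun i hi hne ↦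
    hPdef i (mem_Icc.2 ⟨(mem_Icc.1 hi).1, by have := (mem_Icc.1 hi).2; omega⟩)
  have hPmγ : P m * γ m = Pt' * γ (m - 1) / φ - ω := by
    have := (hγ m (mem_Icc.2 ⟨by omega, le_rfl⟩)).ne'
    rw [hPm]
    field_simp
  refine ⟨?_, fun Q hQ hQ_rate ↦ sum_logb_sic_rate_le one_lt_two hω
    (fun i hi ↦ mul_nonneg (hQ i hi).1 (hγ i hi).le) fun i hi ↦ ?_⟩
  · rw [hP_full _ hm₁ (by omega), hPmγ]
    field_simp
    ring
  · rcases eq_or_ne i m with rfl | hne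
    · rw [hPmγ, le_sub_iff_add_le, le_div_iff₀ hφ]
      calc (Q i * γ i + ω) * φ ≤ Q (i - 1) * γ (i - 1) := by linarith
        _ ≤ Pt' * γ (i - 1) := mul_le_mul_of_nonneg_right (hQ _ hm₁).2 (hγ _ hm₁).le
    · rw [hP_full i hi hne]
      exact mul_le_mul_of_nonneg_right (hQ i hi).2 (hγ i hi).le

/-- Uplink NOMA optimal power allocation when the minimum-rate constraint of
user m-1 is binding: users 1..m-1 transmit at full power and
`P m = Pt'·γ_{m-1}/(φ·γ_m) - ω/γ_m`.  Then (a) user (m-1)'s rate constraint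
holds with equality, and (b) this allocation maximizes the sum throughput among
all feasible allocations satisfying that constraint. -/
theorem ul_noma_opt_power_rate_binding
    (m : ℕ) (hm : 2 ≤ m) (γ : ℕ → ℝ) (ω Pt' φ : ℝ)
    (hγ : ∀ i ∈ Finset.Icc 1 m, 0 < γ i)
    (hω : 0 < ω) (hPt : 0 < Pt') (hφ : 0 < φ)
    (P : ℕ → ℝ)
    (hPdef : ∀ i ∈ Finset.Icc 1 (m - 1), P i = Pt')
    (hPm : P m = Pt' * γ (m - 1) / (φ * γ m) - ω / γ m)
    (hPm0 : 0 ≤ P m) (hPmB : P m ≤ Pt') :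
    P (m - 1) * γ (m - 1) = φ * (P m * γ m + ω) ∧
    ∀ Q : ℕ → ℝ, (∀ i ∈ Finset.Icc 1 m, 0 ≤ Q i ∧ Q i ≤ Pt') →
      Q (m - 1) * γ (m - 1) ≥ φ * (Q m * γ m + ω) →
      ∑ i ∈ Finset.Icc 1 m,
          Real.logb 2 (1 + Q i * γ i / (∑ j ∈ Finset.Icc (i + 1) m, Q j * γ j + ω))
        ≤ ∑ i ∈ Finset.Icc 1 m,
          Real.logb 2 (1 + P i * γ i / (∑ j ∈ Finset.Icc (i + 1) m, P j * γ j + ω)) :=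
  ul_noma_opt_power_rate_binding_general m hm γ ω Pt' φ hγ hω hφ P hPdef hPm
end

section
/- Let m ≥ 2, let γ_1,…,γ_m > 0, let ω > 0, let P_t′ > 0, and let P_tol ≥ 0 be the SIC detection threshold. Define P_i = P_t′ for i = 1,…,m−1 and P_m = (P_t′γ_{m−1} − P_tol)/γ_m, and assume 0 ≤ P_m ≤ P_t′. Then: (a) the SIC constraint between the two weakest users holds with equality, i.e., P_{m−1}γ_{m−1} − P_m γ_m = P_tol; and (b) for every Q_1,…,Q_m with 0 ≤ Q_i ≤ P_t′ for all i and Q_{m−1}γ_{m−1} − Q_m γ_m ≥ P_tol, the sum throughput satisfies Σ_{i=1}^m log₂(1 + Q_i γ_i / (Σ_{j=i+1}^{m} Q_j γ_j + ω)) ≤ Σ_{i=1}^m log₂(1 + P_i γ_i / (Σ_{j=i+1}^{m} P_j γ_j + ω)). -/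
/-!
Writing `S i = ∑_{j ≥ i} Q_j γ_j` for the received power of users `i, …, m` under an allocation
`Q`, the rate of user `i` is `log₂ ((S i + ω) / (S (i + 1) + ω))`, so the sum throughput
telescopes to `log₂ (S 1 + ω) - log₂ ω` and depends only on the total received power. Under the
SIC constraint `Q_m γ_m ≤ Q_{m-1} γ_{m-1} - P_tol ≤ P_t′ γ_{m-1} - P_tol = P_m γ_m`, and
`Q_i ≤ P_t′ = P_i` for `i < m`, so the proposed allocation maximizes every received power, hence
the total.
-/

open Finset

theorem Real.logb_one_add_div_eq_sub {b s t : ℝ} (hs : s ≠ 0) (ht : t ≠ 0) :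
    Real.logb b (1 + (s - t) / t) = Real.logb b s - Real.logb b t := by
  rw [← Real.logb_div hs ht, one_add_div ht, add_sub_cancel]

section SumRate

variable (x : ℕ → ℝ) (ω : ℝ) {a m : ℕ}

theorem sum_logb_one_add_div_tail_eq (b : ℝ) (hω : 0 < ω) (hx : ∀ j ∈ Icc a m, 0 ≤ x j) :
    ∑ i ∈ Icc a m, Real.logb b (1 + x i / (∑ j ∈ Icc (i + 1) m, x j + ω))
      = Real.logb b (∑ j ∈ Icc a m, x j + ω) - Real.logb b ω := by
  rcases lt_or_ge m a with hma | ham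
  · simp [Icc_eq_empty_of_lt hma]
  set T : ℕ → ℝ := fun i ↦ ∑ j ∈ Icc i m, x j + ω
  have hT_pos : ∀ i, a ≤ i → 0 < T i := fun i hi ↦
    add_pos_of_nonneg_of_pos
      (sum_nonneg fun j hj ↦ hx j (mem_Icc.2 ⟨hi.trans (mem_Icc.1 hj).1, (mem_Icc.1 hj).2⟩)) hω
  have hterm : ∀ i ∈ Icc a m, Real.logb b (1 + x i / (∑ j ∈ Icc (i + 1) m, x j + ω))
      = -(Real.logb b (T (i + 1)) - Real.logb b (T i)) := by
    intro i hi
    obtain ⟨hai, him⟩ := mem_Icc.1 hi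
    have hxi : x i = T i - T (i + 1) := by
      simp only [T, Icc_add_one_left_eq_Ioc, ← add_sum_Ioc_eq_sum_Icc him]
      ring
    rw [hxi, neg_sub,
      Real.logb_one_add_div_eq_sub (hT_pos i hai).ne' (hT_pos (i + 1) (by omega)).ne']
  have hT_end : T (m + 1) = ω := by simp [T]
  rw [sum_congr rfl hterm, sum_neg_distrib, sum_Icc_sub ham (fun i ↦ Real.logb b (T i)), hT_end,
    neg_sub]

theorem sum_logb_one_add_div_tail_le {b : ℝ} (hb : 1 < b) (y : ℕ → ℝ) (hω : 0 < ω)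
    (hx : ∀ j ∈ Icc a m, 0 ≤ x j) (hy : ∀ j ∈ Icc a m, 0 ≤ y j)
    (hxy : ∑ j ∈ Icc a m, x j ≤ ∑ j ∈ Icc a m, y j) :
    ∑ i ∈ Icc a m, Real.logb b (1 + x i / (∑ j ∈ Icc (i + 1) m, x j + ω))
      ≤ ∑ i ∈ Icc a m, Real.logb b (1 + y i / (∑ j ∈ Icc (i + 1) m, y j + ω)) := by
  rw [sum_logb_one_add_div_tail_eq x ω b hω hx, sum_logb_one_add_div_tail_eq y ω b hω hy]
  gcongr
  exact add_pos_of_nonneg_of_pos (sum_nonneg hx) hω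

end SumRate

theorem ul_noma_opt_power_sic_binding_general
    (m : ℕ) (hm : 2 ≤ m) (γ : ℕ → ℝ) (ω Pt' Ptol : ℝ)
    (hγ : ∀ i ∈ Finset.Icc 1 m, 0 < γ i)
    (hω : 0 < ω) (hPt : 0 < Pt')
    (P : ℕ → ℝ)
    (hPdef : ∀ i ∈ Finset.Icc 1 (m - 1), P i = Pt')
    (hPm : P m = (Pt' * γ (m - 1) - Ptol) / γ m)
    (hPm0 : 0 ≤ P m) :
    P (m - 1) * γ (m - 1) - P m * γ m = Ptol ∧
    ∀ Q : ℕ → ℝ, (∀ i ∈ Finset.Icc 1 m, 0 ≤ Q i ∧ Q i ≤ Pt') →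
      Q (m - 1) * γ (m - 1) - Q m * γ m ≥ Ptol →
      ∑ i ∈ Finset.Icc 1 m,
          Real.logb 2 (1 + Q i * γ i / (∑ j ∈ Finset.Icc (i + 1) m, Q j * γ j + ω))
        ≤ ∑ i ∈ Finset.Icc 1 m,
          Real.logb 2 (1 + P i * γ i / (∑ j ∈ Finset.Icc (i + 1) m, P j * γ j + ω)) := by
  have hγm : 0 < γ m := hγ m (mem_Icc.2 ⟨by omega, le_rfl⟩)
  have hPm1 : P (m - 1) = Pt' := hPdef (m - 1) (mem_Icc.2 ⟨by omega, le_rfl⟩)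
  have hPmγ : P m * γ m = Pt' * γ (m - 1) - Ptol := by
    rw [hPm, div_mul_cancel₀ _ hγm.ne']
  have hP_eq : ∀ j ∈ Icc 1 m, j ≠ m → P j = Pt' := fun j hj hjm ↦
    hPdef j (mem_Icc.2 ⟨(mem_Icc.1 hj).1, by have := (mem_Icc.1 hj).2; omega⟩)
  refine ⟨by rw [hPm1, hPmγ]; ring, fun Q hQ hsic ↦ ?_⟩
  refine sum_logb_one_add_div_tail_le _ ω one_lt_two _ hω
    (fun j hj ↦ mul_nonneg (hQ j hj).1 (hγ j hj).le) (fun j hj ↦ ?_) (sum_le_sum fun j hj ↦ ?_)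
  · rcases eq_or_ne m j with rfl | hjm
    · exact mul_nonneg hPm0 hγm.le
    · rw [hP_eq j hj hjm.symm]; exact mul_nonneg hPt.le (hγ j hj).le
  · rcases eq_or_ne m j with rfl | hjm
    · have hQm1 : Q (m - 1) * γ (m - 1) ≤ Pt' * γ (m - 1) :=
        mul_le_mul_of_nonneg_right (hQ (m - 1) (mem_Icc.2 ⟨by omega, by omega⟩)).2
          (hγ (m - 1) (mem_Icc.2 ⟨by omega, by omega⟩)).le
      linarith
    · rw [hP_eq j hj hjm.symm]; exact mul_le_mul_of_nonneg_right (hQ j hj).2 (hγ j hj).le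

/-- Uplink NOMA optimal power allocation when the SIC constraint between the
two weakest users is binding: users 1..m-1 transmit at full power and
`P m = (Pt'·γ_{m-1} - Ptol)/γ_m`.  Then (a) the SIC constraint holds with
equality, and (b) this allocation maximizes the sum throughput among all
feasible allocations satisfying that constraint. -/
theorem ul_noma_opt_power_sic_binding
    (m : ℕ) (hm : 2 ≤ m) (γ : ℕ → ℝ) (ω Pt' Ptol : ℝ)
    (hγ : ∀ i ∈ Finset.Icc 1 m, 0 < γ i)
    (hω : 0 < ω) (hPt : 0 < Pt') (hPtol : 0 ≤ Ptol)
    (P : ℕ → ℝ)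
    (hPdef : ∀ i ∈ Finset.Icc 1 (m - 1), P i = Pt')
    (hPm : P m = (Pt' * γ (m - 1) - Ptol) / γ m)
    (hPm0 : 0 ≤ P m) (hPmB : P m ≤ Pt') :
    P (m - 1) * γ (m - 1) - P m * γ m = Ptol ∧
    ∀ Q : ℕ → ℝ, (∀ i ∈ Finset.Icc 1 m, 0 ≤ Q i ∧ Q i ≤ Pt') →
      Q (m - 1) * γ (m - 1) - Q m * γ m ≥ Ptol →
      ∑ i ∈ Finset.Icc 1 m,
          Real.logb 2 (1 + Q i * γ i / (∑ j ∈ Finset.Icc (i + 1) m, Q j * γ j + ω))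
        ≤ ∑ i ∈ Finset.Icc 1 m,
          Real.logb 2 (1 + P i * γ i / (∑ j ∈ Finset.Icc (i + 1) m, P j * γ j + ω)) :=
  ul_noma_opt_power_sic_binding_general m hm γ ω Pt' Ptol hγ hω hPt P hPdef hPm hPm0
end

section
/- Let γ_1 > γ_2 > 0, ω > 0, and P_t > 0. Define g(x) = log₂(1 + x·γ_1/ω) + log₂(1 + (P_t − x)·γ_2/(x·γ_2 + ω)) for x ∈ [0, P_t], i.e., the 2-user downlink NOMA sum throughput when the stronger user gets power x and the weaker user gets power P_t − x. Then g is strictly increasing on [0, P_t]: for all 0 ≤ x < y ≤ P_t, g(x) < g(y). -/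
/-!
Since `1 + (Pt - x) γ₂ / (x γ₂ + ω) = (Pt γ₂ + ω) / (x γ₂ + ω)`, the sum rate equals
`log₂ ((Pt γ₂ + ω) / ω) + log₂ ((x γ₁ + ω) / (x γ₂ + ω))`: the first term does not depend on `x`,
and the ratio `(x γ₁ + ω) / (x γ₂ + ω)` is strictly increasing in `x ≥ 0` because `γ₁ > γ₂`.
-/

open Real

noncomputable def nomaSumRate (γ1 γ2 ω Pt x : ℝ) : ℝ :=
  logb 2 (1 + x * γ1 / ω) + logb 2 (1 + (Pt - x) * γ2 / (x * γ2 + ω))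

lemma one_add_sub_mul_div_eq {c ω P z : ℝ} (h : z * c + ω ≠ 0) :
    1 + (P - z) * c / (z * c + ω) = (P * c + ω) / (z * c + ω) := by
  field_simp
  ring

lemma strictMonoOn_mul_add_div_mul_add {a b ω : ℝ} (hba : b < a) (hb : 0 ≤ b) (hω : 0 < ω) :
    StrictMonoOn (fun x => (x * a + ω) / (x * b + ω)) (Set.Ici 0) := by
  intro x hx y hy hxy
  simp only [Set.mem_Ici] at hx hy
  rw [div_lt_div_iff₀ (by positivity) (by positivity)]
  -- the two cross products differ by exactly `ω (y - x) (a - b)`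
  nlinarith [mul_pos hω (mul_pos (sub_pos.2 hxy) (sub_pos.2 hba))]

lemma nomaSumRate_eq {γ1 γ2 ω Pt x : ℝ} (hω : ω ≠ 0) (h1 : x * γ1 + ω ≠ 0)
    (h2 : x * γ2 + ω ≠ 0) (hPt : Pt * γ2 + ω ≠ 0) :
    nomaSumRate γ1 γ2 ω Pt x =
      logb 2 ((Pt * γ2 + ω) / ω) + logb 2 ((x * γ1 + ω) / (x * γ2 + ω)) := by
  have h_strong : 1 + x * γ1 / ω = (x * γ1 + ω) / ω := by
    field_simp
    ring
  rw [nomaSumRate, h_strong, one_add_sub_mul_div_eq h2, logb_div h1 hω, logb_div hPt h2,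
    logb_div hPt hω, logb_div h1 h2]
  ring

lemma nomaSumRate_strictMonoOn {γ1 γ2 ω Pt : ℝ} (h12 : γ2 < γ1) (h2 : 0 ≤ γ2) (hω : 0 < ω)
    (hPt : 0 ≤ Pt) : StrictMonoOn (nomaSumRate γ1 γ2 ω Pt) (Set.Ici 0) := by
  intro x hx y hy hxy
  have h1 : 0 ≤ γ1 := h2.trans h12.le
  simp only [Set.mem_Ici] at hx hy
  rw [nomaSumRate_eq hω.ne' (by positivity) (by positivity) (by positivity),
    nomaSumRate_eq hω.ne' (by positivity) (by positivity) (by positivity)]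
  exact add_lt_add_right (logb_lt_logb one_lt_two (by positivity)
    (strictMonoOn_mul_add_div_mul_add h12 h2 hω hx hy hxy)) _

theorem dl_noma_two_user_throughput_strict_mono_general
    (γ1 γ2 ω Pt : ℝ) (h12 : γ2 < γ1) (h2 : 0 < γ2) (hω : 0 < ω)
    (g : ℝ → ℝ)
    (hg : ∀ x, g x = Real.logb 2 (1 + x * γ1 / ω)
        + Real.logb 2 (1 + (Pt - x) * γ2 / (x * γ2 + ω))) :
    ∀ x y : ℝ, 0 ≤ x → x < y → y ≤ Pt → g x < g y := by
  intro x y hx hxy hyPt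
  have hy : 0 ≤ y := hx.trans hxy.le
  have hg_eq : g = nomaSumRate γ1 γ2 ω Pt := funext hg
  rw [hg_eq]
  exact nomaSumRate_strictMonoOn h12 h2.le hω (hy.trans hyPt) hx hy hxy

/-- The 2-user downlink NOMA sum throughput, as a function of the power `x`
given to the stronger user (with the weaker user getting `Pt - x`), is strictly
increasing on `[0, Pt]`. -/
theorem dl_noma_two_user_throughput_strict_mono
    (γ1 γ2 ω Pt : ℝ) (h12 : γ2 < γ1) (h2 : 0 < γ2) (hω : 0 < ω) (hPt : 0 < Pt)
    (g : ℝ → ℝ)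
    (hg : ∀ x, g x = Real.logb 2 (1 + x * γ1 / ω)
        + Real.logb 2 (1 + (Pt - x) * γ2 / (x * γ2 + ω))) :
    ∀ x y : ℝ, 0 ≤ x → x < y → y ≤ Pt → g x < g y :=
  dl_noma_two_user_throughput_strict_mono_general γ1 γ2 ω Pt h12 h2 hω g hg
end

section
/- Let γ_1 > γ_2 > 0, ω > 0, P_t > 0, P_tol ≥ 0, and φ_2 > 1 (where φ_2 = 2^{R_2/(ωB)} encodes the weak user's minimum rate). Define P_1 = P_t/φ_2 − ω(φ_2 − 1)/(φ_2γ_2) and P_2 = P_t − P_1, and assume P_1 ≥ 0 and (P_2 − P_1)·γ_1 ≥ P_tol. Then: (a) the weak user's rate constraint holds with equality, P_2γ_2 = (φ_2 − 1)(P_1γ_2 + ω); and (b) for all Q_1, Q_2 ≥ 0 with Q_1 + Q_2 ≤ P_t, Q_2γ_2 ≥ (φ_2 − 1)(Q_1γ_2 + ω), and (Q_2 − Q_1)·γ_1 ≥ P_tol, the sum throughput satisfies log₂(1 + Q_1γ_1/ω) + log₂(1 + Q_2γ_2/(Q_1γ_2 + ω)) ≤ log₂(1 + P_1γ_1/ω)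 + log₂(1 + P_2γ_2/(P_1γ_2 + ω)). -/
/-!
Writing the sum throughput of an allocation `(Q₁, Q₂)` as
`log₂ ((ω + Q₁γ₁)/(ω + Q₁γ₂)) + log₂ (1 + (Q₁ + Q₂)γ₂/ω)`, it grows with the strong user's power
`Q₁` (because `γ₂ ≤ γ₁`) and with the total power `Q₁ + Q₂`. The weak user's rate constraint
together with the power budget caps `Q₁` at exactly `P₁`, and `P₁ + P₂ = P_t`.
-/

open Real

noncomputable def sumRate (γ1 γ2 ω Q1 Q2 : ℝ) : ℝ :=
  logb 2 (1 + Q1 * γ1 / ω) + logb 2 (1 + Q2 * γ2 / (Q1 * γ2 + ω))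

section

variable {γ1 γ2 ω Q1 Q2 : ℝ}

theorem sumRate_eq_logb_ratio_add_logb_total (hω : 0 < ω) (hγ1 : 0 ≤ γ1) (hγ2 : 0 ≤ γ2)
    (hQ1 : 0 ≤ Q1) (hQ2 : 0 ≤ Q2) :
    sumRate γ1 γ2 ω Q1 Q2 =
      logb 2 ((ω + Q1 * γ1) / (ω + Q1 * γ2)) + logb 2 (1 + (Q1 + Q2) * γ2 / ω) := by
  rw [sumRate, ← logb_mul (by positivity) (by positivity),
    ← logb_mul (by positivity) (by positivity)]
  congr 1
  field_simp
  ring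

theorem monotoneOn_add_mul_div_add_mul (hω : 0 < ω) (hγ2 : 0 ≤ γ2) (hγ : γ2 ≤ γ1) :
    MonotoneOn (fun Q => (ω + Q * γ1) / (ω + Q * γ2)) (Set.Ici 0) := by
  intro a ha b hb hab
  simp only [Set.mem_Ici] at ha hb
  rw [div_le_div_iff₀ (by positivity) (by positivity)]
  nlinarith [mul_nonneg (mul_nonneg (sub_nonneg.2 hab) (sub_nonneg.2 hγ)) hω.le]

end

theorem dl_noma_two_user_opt_rate_binding_general
    (γ1 γ2 ω Pt Ptol φ2 : ℝ) (h12 : γ2 < γ1) (h2 : 0 < γ2) (hω : 0 < ω)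
    (hφ : 1 < φ2)
    (P1 P2 : ℝ)
    (hP1 : P1 = Pt / φ2 - ω * (φ2 - 1) / (φ2 * γ2))
    (hP2 : P2 = Pt - P1)
    (hP1nn : 0 ≤ P1) :
    P2 * γ2 = (φ2 - 1) * (P1 * γ2 + ω) ∧
    ∀ Q1 Q2 : ℝ, 0 ≤ Q1 → 0 ≤ Q2 → Q1 + Q2 ≤ Pt →
      Q2 * γ2 ≥ (φ2 - 1) * (Q1 * γ2 + ω) → (Q2 - Q1) * γ1 ≥ Ptol →
      Real.logb 2 (1 + Q1 * γ1 / ω) + Real.logb 2 (1 + Q2 * γ2 / (Q1 * γ2 + ω))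
        ≤ Real.logb 2 (1 + P1 * γ1 / ω) + Real.logb 2 (1 + P2 * γ2 / (P1 * γ2 + ω)) := by
  have hγ1 : 0 < γ1 := h2.trans h12
  have hP1_mul : P1 * (φ2 * γ2) = Pt * γ2 - ω * (φ2 - 1) := by
    rw [hP1]; field_simp
  have hbinding : P2 * γ2 = (φ2 - 1) * (P1 * γ2 + ω) := by
    rw [hP2]; linear_combination -hP1_mul
  refine ⟨hbinding, fun Q1 Q2 hQ1 hQ2 hsum hrate _ => ?_⟩
  have hP2nn : 0 ≤ P2 := by
    have : 0 ≤ P2 * γ2 := by rw [hbinding]; exact mul_nonneg (sub_nonneg.2 hφ.le) (by positivity)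
    exact nonneg_of_mul_nonneg_left this h2
  have hQ1P1 : Q1 ≤ P1 := by
    have hcap : Q1 * (φ2 * γ2) ≤ P1 * (φ2 * γ2) := by
      rw [hP1_mul]; linarith [mul_le_mul_of_nonneg_right hsum h2.le]
    exact le_of_mul_le_mul_right hcap (mul_pos (by linarith) h2)
  change sumRate γ1 γ2 ω Q1 Q2 ≤ sumRate γ1 γ2 ω P1 P2
  rw [sumRate_eq_logb_ratio_add_logb_total hω hγ1.le h2.le hQ1 hQ2,
    sumRate_eq_logb_ratio_add_logb_total hω hγ1.le h2.le hP1nn hP2nn]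
  gcongr ?_ + ?_
  · exact logb_le_logb_of_le one_lt_two (by positivity)
      (monotoneOn_add_mul_div_add_mul hω h2.le h12.le hQ1 (hQ1.trans hQ1P1) hQ1P1)
  · exact logb_le_logb_of_le one_lt_two (by positivity) (by gcongr 1 + ?_ * _ / _; linarith)

/-- 2-user downlink NOMA, case where the weak user's rate constraint is
binding: with `P1 = Pt/φ2 - ω(φ2-1)/(φ2 γ2)` and `P2 = Pt - P1`,
(a) the weak user's rate constraint holds with equality, and (b) this
allocation maximizes the sum throughput among all feasible allocations. -/
theorem dl_noma_two_user_opt_rate_binding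
    (γ1 γ2 ω Pt Ptol φ2 : ℝ) (h12 : γ2 < γ1) (h2 : 0 < γ2) (hω : 0 < ω)
    (hPt : 0 < Pt) (hPtol : 0 ≤ Ptol) (hφ : 1 < φ2)
    (P1 P2 : ℝ)
    (hP1 : P1 = Pt / φ2 - ω * (φ2 - 1) / (φ2 * γ2))
    (hP2 : P2 = Pt - P1)
    (hP1nn : 0 ≤ P1)
    (hSIC : (P2 - P1) * γ1 ≥ Ptol) :
    P2 * γ2 = (φ2 - 1) * (P1 * γ2 + ω) ∧
    ∀ Q1 Q2 : ℝ, 0 ≤ Q1 → 0 ≤ Q2 → Q1 + Q2 ≤ Pt →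
      Q2 * γ2 ≥ (φ2 - 1) * (Q1 * γ2 + ω) → (Q2 - Q1) * γ1 ≥ Ptol →
      Real.logb 2 (1 + Q1 * γ1 / ω) + Real.logb 2 (1 + Q2 * γ2 / (Q1 * γ2 + ω))
        ≤ Real.logb 2 (1 + P1 * γ1 / ω) + Real.logb 2 (1 + P2 * γ2 / (P1 * γ2 + ω)) :=
  dl_noma_two_user_opt_rate_binding_general γ1 γ2 ω Pt Ptol φ2 h12 h2 hω hφ P1 P2 hP1 hP2 hP1nn
end

section
/- Let m ≥ 2, let γ_1,…,γ_m > 0, let ω ≥ 0, let P_t be a real number, and let φ_2,…,φ_m > 0. Define P_1 = P_t/(∏_{j=2}^m φ_j) − Σ_{j=2}^m ω(φ_j − 1)/(γ_j·∏_{k=2}^j φ_k), and for each i = 2,…,m define P_i = (φ_i − 1)·[ P_t/(∏_{j=i}^m φ_j) − Σ_{j=i}^m ω(φ_j − 1)/(γ_j·∏_{k=i}^j φ_k) + ω/γ_i ]. Then Σ_{i=1}^m P_i = P_t, and for every i = 2,…,m the rate constraint of user i holds with equality: P_iγ_i = (φ_i − 1)·(Σ_{j=1}^{i−1} P_jγ_i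 + ω). -/
/-!
With `S i := Pt / ∏_{j=i}^m φ j - ∑_{j=i}^m ω (φ j - 1) / (γ j ∏_{k=i}^j φ k)` one has
`S (m + 1) = Pt`, `P 1 = S 2` and `S (i + 1) = φ i * S i + ω (φ i - 1) / γ i`, so that
`P i = S (i + 1) - S i` for `i ≥ 2`. The powers telescope: `∑_{j<i} P j = S i`, which gives the
total power for `i = m + 1` and, substituted into `P i = (φ i - 1) (S i + ω / γ i)`, the binding
rate constraints.
-/
open Finset

/-- The solution of the backward affine recursion `s (i + 1) = a i * s i + b i`, `s (m + 1) = x`. -/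
noncomputable def backwardSolution (a b : ℕ → ℝ) (x : ℝ) (m i : ℕ) : ℝ :=
  x / ∏ j ∈ Icc i m, a j - ∑ j ∈ Icc i m, b j / ∏ k ∈ Icc i j, a k

namespace backwardSolution

variable (a b : ℕ → ℝ) (x : ℝ) {m i : ℕ}

theorem of_lt (h : m < i) : backwardSolution a b x m i = x := by
  simp [backwardSolution, Icc_eq_empty_of_lt h]

theorem succ (him : i ≤ m) (ha : a i ≠ 0) :
    backwardSolution a b x m (i + 1) = a i * backwardSolution a b x m i + b i := by
  have peel : ∀ {j}, i ≤ j → ∏ k ∈ Icc i j, a k = a i * ∏ k ∈ Icc (i + 1) j, a k := fun h => by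
    rw [Icc_add_one_left_eq_Ioc, mul_prod_Ioc_eq_prod_Icc h]
  have tail : ∑ j ∈ Icc (i + 1) m, b j / ∏ k ∈ Icc i j, a k
      = (∑ j ∈ Icc (i + 1) m, b j / ∏ k ∈ Icc (i + 1) j, a k) / a i := by
    rw [sum_div]
    refine sum_congr rfl fun j hj => ?_
    rw [peel (by grind), div_div, mul_comm]
  rw [backwardSolution, backwardSolution, peel him, ← insert_Icc_add_one_left_eq_Icc him,
    sum_insert (by simp), tail, Icc_self, prod_singleton]
  field_simp
  ring

end backwardSolution

theorem sum_Icc_one_eq_of_eq_sub {M : Type*} [AddCommGroup M] (s P : ℕ → M) {n : ℕ}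
    (hn : 1 ≤ n) (h1 : P 1 = s 2) (hP : ∀ i ∈ Icc 2 n, P i = s (i + 1) - s i) :
    ∑ i ∈ Icc 1 n, P i = s (n + 1) := by
  induction n, hn using Nat.le_induction with
  | base => simpa using h1
  | succ n hn ih =>
    rw [sum_Icc_succ_top (by omega), ih fun i hi => hP i (by grind),
      hP (n + 1) (by grind), add_sub_cancel]

theorem dl_noma_closed_form_all_rate_binding_general
    (m : ℕ) (hm : 2 ≤ m) (γ φ : ℕ → ℝ) (ω Pt : ℝ)
    (hγ : ∀ i ∈ Finset.Icc 1 m, 0 < γ i)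
    (hφ : ∀ j ∈ Finset.Icc 2 m, 0 < φ j)
    (P : ℕ → ℝ)
    (hP1 : P 1 = Pt / (∏ j ∈ Finset.Icc 2 m, φ j)
        - ∑ j ∈ Finset.Icc 2 m, ω * (φ j - 1) / (γ j * ∏ k ∈ Finset.Icc 2 j, φ k))
    (hPi : ∀ i ∈ Finset.Icc 2 m, P i = (φ i - 1) *
        (Pt / (∏ j ∈ Finset.Icc i m, φ j)
          - ∑ j ∈ Finset.Icc i m, ω * (φ j - 1) / (γ j * ∏ k ∈ Finset.Icc i j, φ k)
          + ω / γ i)) :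
    (∑ i ∈ Finset.Icc 1 m, P i = Pt) ∧
    ∀ i ∈ Finset.Icc 2 m,
      P i * γ i = (φ i - 1) * (∑ j ∈ Finset.Icc 1 (i - 1), P j * γ i + ω) := by
  set S := backwardSolution φ (fun j => ω * (φ j - 1) / γ j) Pt m
  have hS : ∀ i, S i = Pt / (∏ j ∈ Icc i m, φ j)
      - ∑ j ∈ Icc i m, ω * (φ j - 1) / (γ j * ∏ k ∈ Icc i j, φ k) := fun i => by
    simp only [S, backwardSolution, div_div]
  have hstep : ∀ i ∈ Icc 2 m, S (i + 1) = φ i * S i + ω * (φ i - 1) / γ i := fun i hi =>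
    backwardSolution.succ _ _ _ (mem_Icc.1 hi).2 (hφ i hi).ne'
  have hP : ∀ i ∈ Icc 2 m, P i = S (i + 1) - S i := fun i hi => by
    rw [hPi i hi, hstep i hi, ← hS]
    ring
  have hprefix : ∀ n ∈ Icc 1 m, ∑ j ∈ Icc 1 n, P j = S (n + 1) := fun n hn =>
    sum_Icc_one_eq_of_eq_sub S P (mem_Icc.1 hn).1 (hP1.trans (hS 2).symm)
      fun i hi => hP i (by grind)
  refine ⟨(hprefix m (by grind)).trans (backwardSolution.of_lt _ _ _ m.lt_succ_self), ?_⟩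
  intro i hi
  have hγi := (hγ i (by grind)).ne'
  rw [← sum_mul, hprefix (i - 1) (by grind), Nat.sub_add_cancel (by grind), hP i hi, hstep i hi]
  field_simp
  ring

/-- Closed-form downlink NOMA power allocation (Lemma 2, case where all
minimum-rate constraints of users 2..m are binding): the powers sum to `Pt`
and every rate constraint holds with equality. -/
theorem dl_noma_closed_form_all_rate_binding
    (m : ℕ) (hm : 2 ≤ m) (γ φ : ℕ → ℝ) (ω Pt : ℝ)
    (hγ : ∀ i ∈ Finset.Icc 1 m, 0 < γ i)
    (hω : 0 ≤ ω)
    (hφ : ∀ j ∈ Finset.Icc 2 m, 0 < φ j)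
    (P : ℕ → ℝ)
    (hP1 : P 1 = Pt / (∏ j ∈ Finset.Icc 2 m, φ j)
        - ∑ j ∈ Finset.Icc 2 m, ω * (φ j - 1) / (γ j * ∏ k ∈ Finset.Icc 2 j, φ k))
    (hPi : ∀ i ∈ Finset.Icc 2 m, P i = (φ i - 1) *
        (Pt / (∏ j ∈ Finset.Icc i m, φ j)
          - ∑ j ∈ Finset.Icc i m, ω * (φ j - 1) / (γ j * ∏ k ∈ Finset.Icc i j, φ k)
          + ω / γ i)) :
    (∑ i ∈ Finset.Icc 1 m, P i = Pt) ∧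
    ∀ i ∈ Finset.Icc 2 m,
      P i * γ i = (φ i - 1) * (∑ j ∈ Finset.Icc 1 (i - 1), P j * γ i + ω) :=
  dl_noma_closed_form_all_rate_binding_general m hm γ φ ω Pt hγ hφ P hP1 hPi
end

section
/- Let m ≥ 2, let γ_1,…,γ_{m−1} > 0, let P_tol be a real number, and let P_t be a real number. Define P_1 = P_t/2^{m−1} − Σ_{j=1}^{m−1} P_tol/(2^j·γ_j), and for each i = 2,…,m define P_i = P_t/2^{m−i+1} + P_tol/(2γ_{i−1}) − Σ_{j=i}^{m−1} P_tol/(2^{j−i+2}·γ_j). Then Σ_{i=1}^m P_i = P_t, and for every i = 2,…,m the SIC constraint holds with equality: (P_i − Σ_{j=1}^{i−1} P_j)·γ_{i−1} = P_tol. -/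
/-!
With `c j = Ptol / γ j`, the partial sums of the allocation are
`∑_{i ≤ k} P i = Pt / 2^(m-k) - ∑_{j=k}^{m-1} c j / 2^(j-k+1)`, by induction on `k`: passing
from `k` to `k + 1` doubles the `Pt` term and the dyadic tail peels off its first term `c k / 2`,
which the `c k / 2` in `P (k+1)` cancels. At `k = m` the tail is empty, giving the total power,
and comparing `P i` with the partial sum up to `i - 1` leaves exactly `c (i - 1)`.
-/

open Finset

noncomputable def dyadicTail (c : ℕ → ℝ) (k n : ℕ) : ℝ :=
  ∑ j ∈ Icc k n, c j / 2 ^ (j - k + 1)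

lemma dyadicTail_of_lt (c : ℕ → ℝ) {k n : ℕ} (h : n < k) : dyadicTail c k n = 0 := by
  simp [dyadicTail, Icc_eq_empty_of_lt h]

lemma dyadicTail_eq_of_le (c : ℕ → ℝ) {k n : ℕ} (h : k ≤ n) :
    dyadicTail c k n = (c k + dyadicTail c (k + 1) n) / 2 := by
  rw [dyadicTail, ← insert_Icc_add_one_left_eq_Icc h, sum_insert (by simp), dyadicTail,
    add_div, sum_div]
  congr 1
  · simp
  · refine sum_congr rfl fun j hj => ?_
    rw [mem_Icc] at hj
    rw [div_div, ← pow_succ]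
    congr 2
    omega

structure IsDyadicAllocation (m : ℕ) (c : ℕ → ℝ) (Pt : ℝ) (P : ℕ → ℝ) : Prop where
  first : P 1 = Pt / 2 ^ (m - 1) - dyadicTail c 1 (m - 1)
  succ : ∀ i ∈ Icc 2 m,
    P i = Pt / 2 ^ (m - i + 1) + c (i - 1) / 2 - dyadicTail c i (m - 1) / 2

namespace IsDyadicAllocation

variable {m : ℕ} {c P : ℕ → ℝ} {Pt : ℝ}

lemma sum_Icc_one (h : IsDyadicAllocation m c Pt P) :
    ∀ k ∈ Icc 1 m, ∑ i ∈ Icc 1 k, P i = Pt / 2 ^ (m - k) - dyadicTail c k (m - 1) := by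
  intro k hk
  induction k with
  | zero => simp at hk
  | succ k ih =>
    rcases Nat.eq_zero_or_pos k with rfl | hk0
    · simpa using h.first
    rw [mem_Icc] at hk
    rw [sum_Icc_succ_top (by omega), ih (by simp; omega), h.succ (k + 1) (by simp; omega),
      dyadicTail_eq_of_le c (show k ≤ m - 1 by omega), Nat.add_sub_cancel,
      show m - k = m - (k + 1) + 1 by omega, pow_succ]
    ring

lemma sum_Icc_one_self (h : IsDyadicAllocation m c Pt P) (hm : 0 < m) :
    ∑ i ∈ Icc 1 m, P i = Pt := by
  rw [h.sum_Icc_one m (by simp; omega), dyadicTail_of_lt c (by omega), Nat.sub_self]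
  simp

lemma sub_sum_Icc_one_pred (h : IsDyadicAllocation m c Pt P) :
    ∀ i ∈ Icc 2 m, P i - ∑ j ∈ Icc 1 (i - 1), P j = c (i - 1) := by
  intro i hi
  rw [mem_Icc] at hi
  rw [h.succ i (by simp; omega), h.sum_Icc_one (i - 1) (by simp; omega),
    dyadicTail_eq_of_le c (show i - 1 ≤ m - 1 by omega), Nat.sub_add_cancel (by omega : 1 ≤ i),
    show m - (i - 1) = m - i + 1 by omega]
  ring

end IsDyadicAllocation

/-- Closed-form downlink NOMA power allocation (Lemma 2, case where all SIC
constraints are binding): the powers sum to `Pt` and every SIC constraint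
holds with equality. -/
theorem dl_noma_closed_form_all_sic_binding
    (m : ℕ) (hm : 2 ≤ m) (γ : ℕ → ℝ) (Ptol Pt : ℝ)
    (hγ : ∀ i ∈ Finset.Icc 1 (m - 1), 0 < γ i)
    (P : ℕ → ℝ)
    (hP1 : P 1 = Pt / 2 ^ (m - 1)
        - ∑ j ∈ Finset.Icc 1 (m - 1), Ptol / (2 ^ j * γ j))
    (hPi : ∀ i ∈ Finset.Icc 2 m, P i = Pt / 2 ^ (m - i + 1)
        + Ptol / (2 * γ (i - 1))
        - ∑ j ∈ Finset.Icc i (m - 1), Ptol / (2 ^ (j - i + 2) * γ j)) :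
    (∑ i ∈ Finset.Icc 1 m, P i = Pt) ∧
    ∀ i ∈ Finset.Icc 2 m,
      (P i - ∑ j ∈ Finset.Icc 1 (i - 1), P j) * γ (i - 1) = Ptol := by
  have hP : IsDyadicAllocation m (fun j => Ptol / γ j) Pt P := by
    refine ⟨?_, fun i hi => ?_⟩
    · rw [hP1, dyadicTail]
      congr 1
      refine sum_congr rfl fun j hj => ?_
      rw [Nat.sub_add_cancel (mem_Icc.1 hj).1, div_mul_eq_div_div_swap]
    · rw [hPi i hi, dyadicTail, sum_div, div_mul_eq_div_div_swap]
      congr 1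
      refine sum_congr rfl fun j _ => ?_
      rw [div_mul_eq_div_div_swap, div_div _ (2 ^ (j - i + 1)), ← pow_succ]
  refine ⟨hP.sum_Icc_one_self (by omega), fun i hi => ?_⟩
  have hγi : γ (i - 1) ≠ 0 := (hγ (i - 1) (by simp at hi ⊢; omega)).ne'
  rw [hP.sub_sum_Icc_one_pred i hi, div_mul_cancel₀ Ptol hγi]
end

section
/- Let γ_1 > γ_2 > γ_3 > 0, ω ≥ 0, P_t real, P_tol real, and φ_2 > 0. Define P_1 = P_t/(2φ_2) − ω(φ_2 − 1)/(φ_2γ_2) − P_tol/(2φ_2γ_2), P_2 = P_t(φ_2 − 1)/(2φ_2) + ω(φ_2 − 1)/(φ_2γ_2) − P_tol(φ_2 − 1)/(2φ_2γ_2), and P_3 = P_t/2 + P_tol/(2γ_2). Then P_1 + P_2 + P_3 = P_t, user 2's rate constraint holds with equality, P_2γ_2 = (φ_2 − 1)(P_1γ_2 + ω), and the SIC constraint for user 3 holds with equality, (P_3 − P_1 − P_2)·γ_2 = P_tol. -/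
/-! Users 1 and 2 share the power `S = P_t/2 - P_tol/(2γ₂)` and user 3 receives the rest,
`P_t/2 + P_tol/(2γ₂)`, so the budget is met and the SIC gap is `P_tol/γ₂`. Within `S`, user 1
gets `S/φ₂ - ω(φ₂-1)/(φ₂γ₂)`, the unique split making user 2's rate constraint tight. -/

section BindingSplit

variable {K : Type*} [Field K]

theorem rate_binding_split {S ω φ γ : K} (hφ : φ ≠ 0) (hγ : γ ≠ 0) :
    (S * (φ - 1) / φ + ω * (φ - 1) / (φ * γ)) * γ
      = (φ - 1) * ((S / φ - ω * (φ - 1) / (φ * γ)) * γ + ω) := by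
  field_simp
  ring

theorem sic_binding_split [CharZero K] {T d γ : K} (hγ : γ ≠ 0) :
    ((T / 2 + d / (2 * γ)) - (T / 2 - d / (2 * γ))) * γ = d := by
  field_simp
  ring

end BindingSplit

theorem dl_noma_three_user_rate2_sic3_binding_general
    (γ2 γ3 ω Pt Ptol φ2 : ℝ)
    (h23 : γ3 < γ2) (h3 : 0 < γ3)
    (hφ : 0 < φ2)
    (P1 P2 P3 : ℝ)
    (hP1 : P1 = Pt / (2 * φ2) - ω * (φ2 - 1) / (φ2 * γ2) - Ptol / (2 * φ2 * γ2))
    (hP2 : P2 = Pt * (φ2 - 1) / (2 * φ2) + ω * (φ2 - 1) / (φ2 * γ2)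
        - Ptol * (φ2 - 1) / (2 * φ2 * γ2))
    (hP3 : P3 = Pt / 2 + Ptol / (2 * γ2)) :
    P1 + P2 + P3 = Pt ∧
    P2 * γ2 = (φ2 - 1) * (P1 * γ2 + ω) ∧
    (P3 - P1 - P2) * γ2 = Ptol := by
  have hγ2 : γ2 ≠ 0 := (h3.trans h23).ne'
  have hφ2 : φ2 ≠ 0 := hφ.ne'
  set S := Pt / 2 - Ptol / (2 * γ2) with hS
  have hP1S : P1 = S / φ2 - ω * (φ2 - 1) / (φ2 * γ2) := by rw [hP1, hS]; ring
  have hP2S : P2 = S * (φ2 - 1) / φ2 + ω * (φ2 - 1) / (φ2 * γ2) := by rw [hP2, hS]; ring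
  have hP12 : P1 + P2 = S := by rw [hP1S, hP2S]; field_simp; ring
  refine ⟨?_, ?_, ?_⟩
  · rw [hP12, hP3, hS]; ring
  · rw [hP1S, hP2S]; exact rate_binding_split hφ2 hγ2
  · rw [sub_sub, hP12, hP3, hS]; exact sic_binding_split hγ2

/-- 3-user downlink NOMA closed-form allocation where user 2's rate constraint
and user 3's SIC constraint are binding. -/
theorem dl_noma_three_user_rate2_sic3_binding
    (γ1 γ2 γ3 ω Pt Ptol φ2 : ℝ)
    (h12 : γ2 < γ1) (h23 : γ3 < γ2) (h3 : 0 < γ3)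
    (hω : 0 ≤ ω) (hφ : 0 < φ2)
    (P1 P2 P3 : ℝ)
    (hP1 : P1 = Pt / (2 * φ2) - ω * (φ2 - 1) / (φ2 * γ2) - Ptol / (2 * φ2 * γ2))
    (hP2 : P2 = Pt * (φ2 - 1) / (2 * φ2) + ω * (φ2 - 1) / (φ2 * γ2)
        - Ptol * (φ2 - 1) / (2 * φ2 * γ2))
    (hP3 : P3 = Pt / 2 + Ptol / (2 * γ2)) :
    P1 + P2 + P3 = Pt ∧
    P2 * γ2 = (φ2 - 1) * (P1 * γ2 + ω) ∧
    (P3 - P1 - P2) * γ2 = Ptol :=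
  dl_noma_three_user_rate2_sic3_binding_general γ2 γ3 ω Pt Ptol φ2 h23 h3 hφ P1 P2 P3 hP1 hP2 hP3
end

section
/- Let γ_1 > γ_2 > γ_3 > 0, ω ≥ 0, P_t real, P_tol real, and φ_3 > 0. Define P_1 = P_t/(2φ_3) − P_tol/(2γ_1) − ω(φ_3 − 1)/(2φ_3γ_3), P_2 = P_t/(2φ_3) + P_tol/(2γ_1) − ω(φ_3 − 1)/(2φ_3γ_3), and P_3 = P_t(φ_3 − 1)/φ_3 + ω(φ_3 − 1)/(φ_3γ_3). Then P_1 + P_2 + P_3 = P_t, the SIC constraint for user 2 holds with equality, (P_2 − P_1)·γ_1 = P_tol, and user 3's rate constraint holds with equality, P_3γ_3 = (φ_3 − 1)((P_1 + P_2)γ_3 + ω). -/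
theorem dl_noma_three_user_sic2_rate3_binding_general
    (γ1 γ2 γ3 ω Pt Ptol φ3 : ℝ)
    (h12 : γ2 < γ1) (h23 : γ3 < γ2) (h3 : 0 < γ3)
    (hφ : 0 < φ3)
    (P1 P2 P3 : ℝ)
    (hP1 : P1 = Pt / (2 * φ3) - Ptol / (2 * γ1) - ω * (φ3 - 1) / (2 * φ3 * γ3))
    (hP2 : P2 = Pt / (2 * φ3) + Ptol / (2 * γ1) - ω * (φ3 - 1) / (2 * φ3 * γ3))
    (hP3 : P3 = Pt * (φ3 - 1) / φ3 + ω * (φ3 - 1) / (φ3 * γ3)) :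
    P1 + P2 + P3 = Pt ∧
    (P2 - P1) * γ1 = Ptol ∧
    P3 * γ3 = (φ3 - 1) * ((P1 + P2) * γ3 + ω) := by
  have hγ1 : γ1 ≠ 0 := (h3.trans (h23.trans h12)).ne'
  have hsum : P1 + P2 = Pt / φ3 - ω * (φ3 - 1) / (φ3 * γ3) := by rw [hP1, hP2]; ring
  have hdiff : P2 - P1 = Ptol / γ1 := by rw [hP1, hP2]; ring
  refine ⟨?_, ?_, ?_⟩
  · rw [hsum, hP3]
    field_simp
    ring
  · rw [hdiff, div_mul_cancel₀ Ptol hγ1]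
  · rw [hP3, hsum]
    field_simp
    ring

/-- 3-user downlink NOMA closed-form allocation where user 2's SIC constraint
and user 3's rate constraint are binding. -/
theorem dl_noma_three_user_sic2_rate3_binding
    (γ1 γ2 γ3 ω Pt Ptol φ3 : ℝ)
    (h12 : γ2 < γ1) (h23 : γ3 < γ2) (h3 : 0 < γ3)
    (hω : 0 ≤ ω) (hφ : 0 < φ3)
    (P1 P2 P3 : ℝ)
    (hP1 : P1 = Pt / (2 * φ3) - Ptol / (2 * γ1) - ω * (φ3 - 1) / (2 * φ3 * γ3))
    (hP2 : P2 = Pt / (2 * φ3) + Ptol / (2 * γ1) - ω * (φ3 - 1) / (2 * φ3 * γ3))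
    (hP3 : P3 = Pt * (φ3 - 1) / φ3 + ω * (φ3 - 1) / (φ3 * γ3)) :
    P1 + P2 + P3 = Pt ∧
    (P2 - P1) * γ1 = Ptol ∧
    P3 * γ3 = (φ3 - 1) * ((P1 + P2) * γ3 + ω) :=
  dl_noma_three_user_sic2_rate3_binding_general γ1 γ2 γ3 ω Pt Ptol φ3 h12 h23 h3 hφ P1 P2 P3 hP1 hP2
    hP3
end

section
/- Let γ_1 > γ_2 > γ_3 > γ_4 > 0, ω ≥ 0, P_t real, and φ_2, φ_3, φ_4 > 0. Define P_1 = P_t/(φ_2φ_3φ_4) − ω(φ_2−1)/(φ_2γ_2) − ω(φ_3−1)/(φ_2φ_3γ_3) − ω(φ_4−1)/(φ_2φ_3φ_4γ_4), P_2 = P_t(φ_2−1)/(φ_2φ_3φ_4) + ω(φ_2−1)/(φ_2γ_2) − ω(φ_2−1)(φ_3−1)/(φ_2φ_3γ_3) − ω(φ_2−1)(φ_4−1)/(φ_2φ_3φ_4γ_4), P_3 = P_t(φ_3−1)/(φ_3φ_4) + ω(φ_3−1)/(φ_3γ_3) − ω(φ_3−1)(φ_4−1)/(φ_3φ_4γ_4),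 and P_4 = P_t(φ_4−1)/φ_4 + ω(φ_4−1)/(φ_4γ_4). Then P_1 + P_2 + P_3 + P_4 = P_t and for each i = 2, 3, 4 the rate constraint holds with equality: P_iγ_i = (φ_i − 1)·(Σ_{j=1}^{i−1} P_jγ_i + ω). -/
/-!
Write `S_i = P_1 + ⋯ + P_i`. The binding rate constraint of user `i` says exactly
`S_i = φ_i S_{i-1} + (φ_i - 1) ω / γ_i`, so it can be solved backwards for `S_{i-1}`.
Starting from `S_4 = P_t`, three backward steps give `S_3`, `S_2`, `S_1`, and the stated powers
are the successive differences `P_i = S_i - S_{i-1}`.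
-/

namespace NOMA

/-- `S_{i-1}` in terms of `S = S_i` when the rate constraint of user `i` binds. -/
noncomputable def cumPowerBefore (φ γ ω S : ℝ) : ℝ := (S - ω * (φ - 1) / γ) / φ

theorem rate_binding_of_cumPowerBefore {φ γ ω S S' P : ℝ} (hφ : φ ≠ 0) (hγ : γ ≠ 0)
    (hS' : S' = cumPowerBefore φ γ ω S) (hP : S' + P = S) :
    P * γ = (φ - 1) * (S' * γ + ω) := by
  rw [cumPowerBefore, eq_div_iff hφ] at hS'
  field_simp at hS'
  linear_combination γ * hP - hS'

end NOMA

open NOMA in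
theorem dl_noma_four_user_all_rate_binding_general
    (γ2 γ3 γ4 ω Pt φ2 φ3 φ4 : ℝ)
    (h23 : γ3 < γ2) (h34 : γ4 < γ3) (h4 : 0 < γ4)
    (hφ2 : 0 < φ2) (hφ3 : 0 < φ3) (hφ4 : 0 < φ4)
    (P1 P2 P3 P4 : ℝ)
    (hP1 : P1 = Pt / (φ2 * φ3 * φ4) - ω * (φ2 - 1) / (φ2 * γ2)
        - ω * (φ3 - 1) / (φ2 * φ3 * γ3) - ω * (φ4 - 1) / (φ2 * φ3 * φ4 * γ4))
    (hP2 : P2 = Pt * (φ2 - 1) / (φ2 * φ3 * φ4) + ω * (φ2 - 1) / (φ2 * γ2)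
        - ω * (φ2 - 1) * (φ3 - 1) / (φ2 * φ3 * γ3)
        - ω * (φ2 - 1) * (φ4 - 1) / (φ2 * φ3 * φ4 * γ4))
    (hP3 : P3 = Pt * (φ3 - 1) / (φ3 * φ4) + ω * (φ3 - 1) / (φ3 * γ3)
        - ω * (φ3 - 1) * (φ4 - 1) / (φ3 * φ4 * γ4))
    (hP4 : P4 = Pt * (φ4 - 1) / φ4 + ω * (φ4 - 1) / (φ4 * γ4)) :
    P1 + P2 + P3 + P4 = Pt ∧
    P2 * γ2 = (φ2 - 1) * (P1 * γ2 + ω) ∧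
    P3 * γ3 = (φ3 - 1) * ((P1 + P2) * γ3 + ω) ∧
    P4 * γ4 = (φ4 - 1) * ((P1 + P2 + P3) * γ4 + ω) := by
  have hγ3 : 0 < γ3 := h4.trans h34
  have hγ2 : 0 < γ2 := hγ3.trans h23
  have hS3 : P1 + P2 + P3 = cumPowerBefore φ4 γ4 ω Pt := by
    rw [hP1, hP2, hP3, cumPowerBefore]; field_simp; ring
  have hS2 : P1 + P2 = cumPowerBefore φ3 γ3 ω (P1 + P2 + P3) := by
    rw [hS3, hP1, hP2, cumPowerBefore, cumPowerBefore]; field_simp; ring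
  have hS1 : P1 = cumPowerBefore φ2 γ2 ω (P1 + P2) := by
    rw [hS2, hS3, hP1, cumPowerBefore, cumPowerBefore, cumPowerBefore]; field_simp; ring
  have hS4 : P1 + P2 + P3 + P4 = Pt := by
    rw [hS3, hP4, cumPowerBefore]; field_simp; ring
  exact ⟨hS4, rate_binding_of_cumPowerBefore hφ2.ne' hγ2.ne' hS1 rfl,
    rate_binding_of_cumPowerBefore hφ3.ne' hγ3.ne' hS2 rfl,
    rate_binding_of_cumPowerBefore hφ4.ne' h4.ne' hS3 hS4⟩

/-- 4-user downlink NOMA closed-form allocation (Appendix A) where the rate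
constraints of users 2, 3, 4 are binding: the powers sum to `Pt` and each rate
constraint holds with equality. -/
theorem dl_noma_four_user_all_rate_binding
    (γ1 γ2 γ3 γ4 ω Pt φ2 φ3 φ4 : ℝ)
    (h12 : γ2 < γ1) (h23 : γ3 < γ2) (h34 : γ4 < γ3) (h4 : 0 < γ4)
    (hω : 0 ≤ ω) (hφ2 : 0 < φ2) (hφ3 : 0 < φ3) (hφ4 : 0 < φ4)
    (P1 P2 P3 P4 : ℝ)
    (hP1 : P1 = Pt / (φ2 * φ3 * φ4) - ω * (φ2 - 1) / (φ2 * γ2)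
        - ω * (φ3 - 1) / (φ2 * φ3 * γ3) - ω * (φ4 - 1) / (φ2 * φ3 * φ4 * γ4))
    (hP2 : P2 = Pt * (φ2 - 1) / (φ2 * φ3 * φ4) + ω * (φ2 - 1) / (φ2 * γ2)
        - ω * (φ2 - 1) * (φ3 - 1) / (φ2 * φ3 * γ3)
        - ω * (φ2 - 1) * (φ4 - 1) / (φ2 * φ3 * φ4 * γ4))
    (hP3 : P3 = Pt * (φ3 - 1) / (φ3 * φ4) + ω * (φ3 - 1) / (φ3 * γ3)
        - ω * (φ3 - 1) * (φ4 - 1) / (φ3 * φ4 * γ4))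
    (hP4 : P4 = Pt * (φ4 - 1) / φ4 + ω * (φ4 - 1) / (φ4 * γ4)) :
    P1 + P2 + P3 + P4 = Pt ∧
    P2 * γ2 = (φ2 - 1) * (P1 * γ2 + ω) ∧
    P3 * γ3 = (φ3 - 1) * ((P1 + P2) * γ3 + ω) ∧
    P4 * γ4 = (φ4 - 1) * ((P1 + P2 + P3) * γ4 + ω) :=
  dl_noma_four_user_all_rate_binding_general γ2 γ3 γ4 ω Pt φ2 φ3 φ4 h23 h34 h4 hφ2 hφ3 hφ4 P1 P2 P3
    P4 hP1 hP2 hP3 hP4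
end
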